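/- An integral domain R is a unique factorization domain if and only if its multiplicative monoid R• = R\{0} is length-factorial, i.e., for every nonzero x, any two factorizations of x into irreducibles with the same number of irreducible factors are equal up to order and associates. -/

import Mathlib

/-! Length-factoriality forces every factorization relation `s = t` to be balanced
(`card s = card t`), after which it is plain factoriality. Suppose an irredundant relation
`α·S₂ = β·T₂` had length difference `d > 0`. Lift it to `p P = q Q` in `R`; then
`p (P + Q) = Q (p + q)`, and factoring `P + Q` and `p + q` gives a new relation
`α·w = T₂·e` in which neither `α` nor `β` occurs in `e`, as neither divides `p + q`.
Multiples of two relations can be added so that both sides have the same length, and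
length-factoriality then identifies the two sides as multisets. Counting `α` this way shows
that the new relation is longer on the left, and counting `β` that its length difference is
smaller than `d`; descent on `d` concludes. -/

open Multiset

namespace LF

variable (R : Type*) [CommRing R] [IsDomain R]

/-- Factorizations of a nonzero `x : R` into irreducibles, recorded as multisets of
irreducible associate classes whose product is the class of `x`. -/
def FactorsOf (x : R) : Set (Multiset (Associates R)) :=
  {s | (∀ a ∈ s, Irreducible a) ∧ s.prod = Associates.mk x}

/-- `R` is an atomic domain: every nonzero nonunit is a product of irreducibles. -/
def Atomic : Prop := ∀ x : R, x ≠ 0 → ¬ IsUnit x → (FactorsOf R x).Nonempty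

/-- A factorization relation of the multiplicative monoid `R• = R \ {0}`. -/
def IsRel (z1 z2 : Multiset (Associates R)) : Prop :=
  (∀ a ∈ z1, Irreducible a) ∧ (∀ a ∈ z2, Irreducible a) ∧ z1.prod = z2.prod

/-- An irredundant pair: no common irreducible. -/
def Irredundant (z1 z2 : Multiset (Associates R)) : Prop := ∀ a, a ∈ z1 → a ∉ z2

/-- A purely long irreducible of `R`: a non-prime irreducible (up to associates) that appears
only in the longer side of any irredundant unbalanced factorization relation. -/
def PurelyLong (a : Associates R) : Prop :=
  Irreducible a ∧ ¬ Prime a ∧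
    ∀ z1 z2, IsRel R z1 z2 → Irredundant R z1 z2 → card z1 ≠ card z2 →
      a ∈ z1 → card z2 < card z1

/-- A purely short irreducible of `R`. -/
def PurelyShort (a : Associates R) : Prop :=
  Irreducible a ∧ ¬ Prime a ∧
    ∀ z1 z2, IsRel R z1 z2 → Irredundant R z1 z2 → card z1 ≠ card z2 →
      a ∈ z1 → card z1 < card z2

def LengthFactorial : Prop :=
  ∀ x : R, x ≠ 0 → ∀ s ∈ FactorsOf R x, ∀ t ∈ FactorsOf R x, card s = card t → s = t

theorem _root_.Associates.exists_mul_eq_mul_of_mul_eq {M : Type*} [CommMonoid M]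
    {α β A B : Associates M} (h : α * A = β * B) :
    ∃ p P q Q : M, Associates.mk p = α ∧ Associates.mk q = β ∧ Associates.mk Q = B ∧
      p * P = q * Q := by
  obtain ⟨p, rfl⟩ := Associates.mk_surjective α
  obtain ⟨P, rfl⟩ := Associates.mk_surjective A
  obtain ⟨q, rfl⟩ := Associates.mk_surjective β
  obtain ⟨Q, rfl⟩ := Associates.mk_surjective B
  obtain ⟨u, hu⟩ := Associates.mk_eq_mk_iff_associated.mp <| by
    simpa only [Associates.mk_mul_mk] using h
  exact ⟨p, P * u, q, Q, rfl, rfl, rfl, by rw [← hu, mul_assoc]⟩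

theorem _root_.Multiset.prod_ne_zero_of_irreducible {M₀ : Type*} [CommMonoidWithZero M₀]
    [NoZeroDivisors M₀] [Nontrivial M₀] {s : Multiset M₀} (hs : ∀ a ∈ s, Irreducible a) :
    s.prod ≠ 0 :=
  Multiset.prod_ne_zero fun h => not_irreducible_zero (hs 0 h)

theorem _root_.Associates.forall_irreducible_map_mk {M₀ : Type*} [CommMonoidWithZero M₀]
    {f : Multiset M₀} :
    (∀ a ∈ f.map Associates.mk, Irreducible a) ↔ ∀ a ∈ f, Irreducible a := by
  simp only [Multiset.forall_mem_map_iff, Associates.irreducible_mk]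

section

variable {R}

section

omit [IsDomain R]

theorem Atomic.factorsOf_nonempty (hAt : Atomic R) {x : R} (hx : x ≠ 0) :
    (FactorsOf R x).Nonempty := by
  by_cases hu : IsUnit x
  · exact ⟨0, by simp, by simp [Associates.mk_eq_one.mpr hu]⟩
  · exact hAt x hx hu

theorem not_dvd_add_of_irreducible {p q : R} (hp : Irreducible p) (hq : Irreducible q)
    (hpq : Associates.mk p ≠ Associates.mk q) : ¬p ∣ p + q := fun h =>
  hpq <| Associates.mk_eq_mk_iff_associated.mpr <|
    hp.associated_of_dvd hq <| (dvd_add_right (dvd_refl p)).mp h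

namespace IsRel

variable {s t u v : Multiset (Associates R)}

theorem symm (h : IsRel R s t) : IsRel R t s :=
  ⟨h.2.1, h.1, h.2.2.symm⟩

theorem nsmul_add (h₁ : IsRel R s t) (h₂ : IsRel R u v) (a b : ℕ) :
    IsRel R (a • s + b • u) (a • t + b • v) := by
  have irreducible_of_mem {x y : Multiset (Associates R)} (hx : ∀ c ∈ x, Irreducible c)
      (hy : ∀ c ∈ y, Irreducible c) : ∀ c ∈ a • x + b • y, Irreducible c := by
    intro c hc
    rcases Multiset.mem_add.mp hc with hc | hc
    · exact hx c (Multiset.mem_of_mem_nsmul hc)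
    · exact hy c (Multiset.mem_of_mem_nsmul hc)
  exact ⟨irreducible_of_mem h₁.1 h₂.1, irreducible_of_mem h₁.2.1 h₂.2.1,
    by simp only [Multiset.prod_add, Multiset.prod_nsmul, h₁.2.2, h₂.2.2]⟩

end IsRel

theorem atomic_of_uniqueFactorizationMonoid [UniqueFactorizationMonoid R] : Atomic R :=
  fun x hx _ => ⟨UniqueFactorizationMonoid.factors (Associates.mk x),
    UniqueFactorizationMonoid.irreducible_of_factor,
    associated_iff_eq.mp (UniqueFactorizationMonoid.factors_prod (Associates.mk_ne_zero.mpr hx))⟩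

theorem lengthFactorial_of_uniqueFactorizationMonoid [UniqueFactorizationMonoid R] :
    LengthFactorial R :=
  fun _ _ _ hs _ ht _ => Associates.unique' hs.1 ht.1 (hs.2.trans ht.2.symm)

end

theorem LengthFactorial.eq_of_isRel (hLF : LengthFactorial R) {s t : Multiset (Associates R)}
    (h : IsRel R s t) (hc : card s = card t) : s = t := by
  obtain ⟨x, hx⟩ := Associates.mk_surjective s.prod
  have hx0 : x ≠ 0 := by
    rintro rfl
    exact Multiset.prod_ne_zero_of_irreducible h.1 (by rw [← hx, Associates.mk_zero])
  exact hLF x hx0 s ⟨h.1, hx.symm⟩ t ⟨h.2.1, h.2.2 ▸ hx.symm⟩ hc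

theorem LengthFactorial.nsmul_add_nsmul_eq (hLF : LengthFactorial R)
    {s t u v : Multiset (Associates R)} {d e : ℕ} (h₁ : IsRel R s t) (h₂ : IsRel R u v)
    (hd : card s = card t + d) (he : card u = card v + e) :
    e • s + d • v = e • t + d • u :=
  hLF.eq_of_isRel (h₁.nsmul_add h₂.symm e d) <| by
    simp only [Multiset.card_add, Multiset.card_nsmul, hd, he]
    ring

theorem IsRel.exists_irredundant {s t : Multiset (Associates R)} {d : ℕ} (h : IsRel R s t)
    (hd : card s = card t + d) :
    ∃ s' t', IsRel R s' t' ∧ Irredundant R s' t' ∧ card s' = card t' + d := by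
  classical
  have hs : s - t + s ∩ t = s := Multiset.sub_add_inter s t
  have ht : t - s + s ∩ t = t := by rw [Multiset.inter_comm, Multiset.sub_add_inter]
  refine ⟨s - t, t - s, ⟨fun a ha => h.1 a (Multiset.mem_of_le tsub_le_self ha),
    fun a ha => h.2.1 a (Multiset.mem_of_le tsub_le_self ha), ?_⟩, ?_, ?_⟩
  · refine mul_right_cancel₀ (Multiset.prod_ne_zero_of_irreducible
      fun a ha => h.1 a (Multiset.mem_of_le (Multiset.inter_le_left (t := t)) ha)) ?_
    rw [← Multiset.prod_add, ← Multiset.prod_add, hs, ht, h.2.2]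
  · intro a has hat
    rw [← Multiset.count_pos, Multiset.count_sub] at has hat
    omega
  · have hs' := congrArg card hs
    have ht' := congrArg card ht
    simp only [Multiset.card_add] at hs' ht'
    omega

theorem exists_isRel_cons_of_mul_eq (hAt : Atomic R) {α β : Associates R}
    {S T : Multiset (Associates R)} (hα : Irreducible α) (hβ : Irreducible β)
    (hαβ : α ≠ β) (hT : ∀ a ∈ T, Irreducible a) (h : α * S.prod = β * T.prod) :
    ∃ w e, IsRel R (α ::ₘ w) (T + e) ∧ α ∉ e ∧ β ∉ e := by
  obtain ⟨p, P, q, Q, rfl, rfl, hQ, hpq⟩ := Associates.exists_mul_eq_mul_of_mul_eq h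
  have hp := Associates.irreducible_mk.mp hα
  have hq := Associates.irreducible_mk.mp hβ
  have hQ0 : Q ≠ 0 := by
    rintro rfl
    exact Multiset.prod_ne_zero_of_irreducible hT (by rw [← hQ, Associates.mk_zero])
  have hpq0 : p + q ≠ 0 := fun h0 => not_dvd_add_of_irreducible hp hq hαβ (h0 ▸ dvd_zero p)
  have hkey : p * (P + Q) = Q * (p + q) := by linear_combination hpq
  have hPQ0 : P + Q ≠ 0 := by
    intro h0
    rw [h0, mul_zero] at hkey
    exact mul_ne_zero hQ0 hpq0 hkey.symm
  obtain ⟨w, hw, hwP⟩ := hAt.factorsOf_nonempty hPQ0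
  obtain ⟨e, he, heP⟩ := hAt.factorsOf_nonempty hpq0
  have dvd_of_mem {a : R} (ha : Associates.mk a ∈ e) : a ∣ p + q := by
    rw [← Associates.mk_dvd_mk, ← heP]
    exact Multiset.dvd_prod ha
  refine ⟨w, e, ⟨?_, ?_, ?_⟩,
    fun ha => not_dvd_add_of_irreducible hp hq hαβ (dvd_of_mem ha),
    fun hb => not_dvd_add_of_irreducible hq hp hαβ.symm (add_comm p q ▸ dvd_of_mem hb)⟩
  · simpa only [Multiset.forall_mem_cons] using ⟨hα, hw⟩
  · simpa only [Multiset.mem_add, or_imp, forall_and] using ⟨hT, he⟩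
  · rw [Multiset.prod_cons, Multiset.prod_add, hwP, heP, ← hQ, Associates.mk_mul_mk,
      Associates.mk_mul_mk, hkey]

theorem exists_isRel_card_lt (hAt : Atomic R) (hLF : LengthFactorial R)
    {s t : Multiset (Associates R)} {d : ℕ} (h : IsRel R s t) (hd : card s = card t + d)
    (hd0 : 0 < d) : ∃ u v d', IsRel R u v ∧ card u = card v + d' ∧ 0 < d' ∧ d' < d := by
  classical
  obtain ⟨S, T, h, hirr, hd⟩ := h.exists_irredundant hd
  obtain ⟨α, hαS⟩ := Multiset.card_pos_iff_exists_mem.mp (by omega : 0 < card S)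
  obtain ⟨β, hβT⟩ : ∃ β, β ∈ T := by
    refine Multiset.card_pos_iff_exists_mem.mp (Nat.pos_of_ne_zero fun hT => ?_)
    have hα1 : α ∣ 1 := by
      simpa only [h.2.2, Multiset.card_eq_zero.mp hT, Multiset.prod_zero] using
        Multiset.dvd_prod hαS
    exact (h.1 α hαS).not_isUnit (isUnit_of_dvd_one hα1)
  have hαβ : α ≠ β := by
    rintro rfl
    exact hirr α hαS hβT
  obtain ⟨S₂, rfl⟩ := Multiset.exists_cons_of_mem hαS
  obtain ⟨T₂, rfl⟩ := Multiset.exists_cons_of_mem hβT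
  obtain ⟨w, e, hz, hαe, hβe⟩ :=
    exists_isRel_cons_of_mul_eq hAt (h.1 α hαS) (h.2.1 β hβT) hαβ
      (fun a ha => h.2.1 a (Multiset.mem_cons_of_mem ha))
      (by simpa only [Multiset.prod_cons] using h.2.2)
  rcases le_or_gt (card (α ::ₘ w)) (card (T₂ + e)) with hle | hlt
  · obtain ⟨d', hd'⟩ := Nat.exists_eq_add_of_le hle
    have hα := congrArg (count α) (hLF.nsmul_add_nsmul_eq h hz.symm hd hd')
    have hαT : α ∉ β ::ₘ T₂ := hirr α hαS
    simp only [Multiset.count_add, Multiset.count_nsmul, Multiset.count_cons_self,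
      Multiset.count_eq_zero.mpr hαT, Multiset.count_eq_zero.mpr hαe,
      Multiset.count_eq_zero.mpr (mt Multiset.mem_cons_of_mem hαT)] at hα
    nlinarith
  · obtain ⟨d', hd'⟩ := Nat.exists_eq_add_of_le hlt.le
    refine ⟨α ::ₘ w, T₂ + e, d', hz, hd', by omega, ?_⟩
    have hβ := congrArg (count β) (hLF.nsmul_add_nsmul_eq h hz hd hd')
    simp only [Multiset.count_add, Multiset.count_nsmul, Multiset.count_cons_self,
      Multiset.count_cons_of_ne hαβ.symm, Multiset.count_eq_zero.mpr hβe,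
      Multiset.count_eq_zero.mpr fun hβS => hirr β (Multiset.mem_cons_of_mem hβS) hβT,
      add_zero] at hβ
    nlinarith

theorem IsRel.card_eq (hAt : Atomic R) (hLF : LengthFactorial R) {s t : Multiset (Associates R)}
    (h : IsRel R s t) : card s = card t := by
  suffices balanced : ∀ d s t, IsRel R s t → card s = card t + d → d = 0 by
    rcases le_total (card t) (card s) with hle | hle
    · obtain ⟨d, hd⟩ := Nat.exists_eq_add_of_le hle
      have := balanced d s t h hd
      omega
    · obtain ⟨d, hd⟩ := Nat.exists_eq_add_of_le hle
      have := balanced d t s h.symm hd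
      omega
  intro d
  induction d using Nat.strong_induction_on with
  | _ d ih =>
    intro s t h hd
    by_contra hd0
    obtain ⟨u, v, d', huv, hd', hd'0, hd'd⟩ :=
      exists_isRel_card_lt hAt hLF h hd (Nat.pos_of_ne_zero hd0)
    exact hd'0.ne' (ih d' hd'd u v huv hd')

theorem uniqueFactorizationMonoid_of_lengthFactorial (hAt : Atomic R) (hLF : LengthFactorial R) :
    UniqueFactorizationMonoid R := by
  refine .of_existsUnique_irreducible_factors (fun a ha => ?_) (fun f g hf hg hfg => ?_)
  · obtain ⟨s, hs, hsa⟩ := hAt.factorsOf_nonempty ha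
    obtain ⟨f, rfl⟩ := Multiset.map_surjective_of_surjective Associates.mk_surjective s
    refine ⟨f, Associates.forall_irreducible_map_mk.mp hs, ?_⟩
    rw [← Associates.mk_eq_mk_iff_associated, ← Associates.prod_mk, hsa]
  · have h : IsRel R (f.map Associates.mk) (g.map Associates.mk) :=
      ⟨Associates.forall_irreducible_map_mk.mpr hf, Associates.forall_irreducible_map_mk.mpr hg,
        by rwa [Associates.prod_mk, Associates.prod_mk, Associates.mk_eq_mk_iff_associated]⟩
    exact Associates.rel_associated_iff_map_eq_map.mpr (hLF.eq_of_isRel h (h.card_eq hAt hLF))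

end

/-- An integral domain is a unique factorization domain if and only if its
multiplicative monoid `R• = R \ {0}` is length-factorial: it is atomic and any two
factorizations of a nonzero element with the same length coincide (up to order and
associates). -/
theorem stmt19 :
    UniqueFactorizationMonoid R ↔
      (Atomic R ∧ ∀ x : R, x ≠ 0 →
        ∀ s ∈ FactorsOf R x, ∀ t ∈ FactorsOf R x, card s = card t → s = t) :=
  ⟨fun _ =>
      ⟨atomic_of_uniqueFactorizationMonoid, lengthFactorial_of_uniqueFactorizationMonoid⟩,
    fun ⟨hAt, hLF⟩ => uniqueFactorizationMonoid_of_lengthFactorial hAt hLF⟩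

end LF
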